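/- arXiv:2012.03860 — 4 statements merged into one kernel-verified Lean document; each statement's English description precedes it below -/
import Mathlib

section
/- Let C be a compression function and Ĉ its effective compression function. Let V₁ and V₂ be independent real-valued random variables on a probability space, each almost surely strictly positive, and suppose that Ĉ(V₁|V₂), Ĉ(V₂|V₁), and the product Ĉ(V₁|V₂)·Ĉ(V₂|V₁) are all integrable. Then Cov(Ĉ(V₁|V₂), Ĉ(V₂|V₁)) ≤ 0; equivalently, E[Ĉ(V₁|V₂)·Ĉ(V₂|V₁)] ≤ E[Ĉ(V₁|V₂)]·E[Ĉ(V₂|V₁)]. -/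
open MeasureTheory

/-- A compression function: nonnegative, nondecreasing, and concave on (0, ∞). -/
def IsCompressionFunction (C : ℝ → ℝ) : Prop :=
  (∀ v ∈ Set.Ioi (0 : ℝ), 0 ≤ C v) ∧ MonotoneOn C (Set.Ioi (0 : ℝ)) ∧
    ConcaveOn ℝ (Set.Ioi (0 : ℝ)) C

/-- The effective compression function Ĉ(v₁|v₂) = (C(v₁+v₂)/(v₁+v₂))·v₁. -/
noncomputable def ECF (C : ℝ → ℝ) (v₁ v₂ : ℝ) : ℝ :=
  C (v₁ + v₂) / (v₁ + v₂) * v₁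

open ProbabilityTheory

open Set

/-!
For fixed `v₂ > 0`, `Ĉ(v₁|v₂) = C(v₁+v₂) · v₁/(v₁+v₂)` is nondecreasing in `v₁`, and for fixed
`v₁ > 0` it is nonincreasing in `v₂`, because a nonnegative concave `C` on `(0, ∞)` has `C(x)/x`
nonincreasing. So `F = Ĉ(V₁|V₂)` and `G = Ĉ(V₂|V₁)` are oppositely monotone in each coordinate.
By independence, conditioning on `V₁` and applying Chebyshev's integral inequality first in `V₂`
and then in `V₁` gives `E[FG] ≤ E[F] E[G]`.
-/

-- Stated for any `h ≤ f * g` so that it also applies to conditional means, whose product need not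
-- be known to be integrable.
theorem AntivaryOn.integral_le_integral_mul_integral {α : Type*} [MeasurableSpace α]
    {ν : Measure α} [IsProbabilityMeasure ν] {f g h : α → ℝ} {s : Set α}
    (hfg : AntivaryOn f g s) (hs : ∀ᵐ x ∂ν, x ∈ s) (hf : Integrable f ν) (hg : Integrable g ν)
    (hh : Integrable h ν) (hle : ∀ᵐ x ∂ν, h x ≤ f x * g x) :
    ∫ x, h x ∂ν ≤ (∫ x, f x ∂ν) * ∫ x, g x ∂ν := by
  have hpair : ∀ᵐ p ∂ν.prod ν, h p.1 + h p.2 ≤ f p.1 * g p.2 + g p.1 * f p.2 := by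
    filter_upwards [Measure.quasiMeasurePreserving_fst.ae (hs.and hle),
      Measure.quasiMeasurePreserving_snd.ae (hs.and hle)] with p ⟨hs₁, hle₁⟩ ⟨hs₂, hle₂⟩
    linarith [hfg.mul_add_mul_le_mul_add_mul hs₁ hs₂]
  have hint := integral_mono_ae ((hh.comp_fst ν).add (hh.comp_snd ν))
    ((hf.mul_prod hg).add (hg.mul_prod hf)) hpair
  simp only [Pi.add_apply] at hint
  rw [integral_add (hh.comp_fst ν) (hh.comp_snd ν), integral_add (hf.mul_prod hg) (hg.mul_prod hf),
    integral_fun_fst, integral_fun_snd, integral_prod_mul, integral_prod_mul] at hint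
  simp only [probReal_univ, one_smul] at hint
  linarith

theorem integral_mul_le_integral_mul_integral_prod {α β : Type*} [MeasurableSpace α]
    [MeasurableSpace β] [LinearOrder α] [LinearOrder β] {ν₁ : Measure α} {ν₂ : Measure β}
    [IsProbabilityMeasure ν₁] [IsProbabilityMeasure ν₂] {F G : α × β → ℝ} {s : Set α} {t : Set β}
    (hs : ∀ᵐ a ∂ν₁, a ∈ s) (ht : ∀ᵐ b ∂ν₂, b ∈ t)
    (hF₁ : ∀ b ∈ t, MonotoneOn (fun a => F (a, b)) s)
    (hF₂ : ∀ a ∈ s, AntitoneOn (fun b => F (a, b)) t)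
    (hG₁ : ∀ b ∈ t, AntitoneOn (fun a => G (a, b)) s)
    (hG₂ : ∀ a ∈ s, MonotoneOn (fun b => G (a, b)) t)
    (hF : Integrable F (ν₁.prod ν₂)) (hG : Integrable G (ν₁.prod ν₂))
    (hFG : Integrable (fun p => F p * G p) (ν₁.prod ν₂)) :
    ∫ p, F p * G p ∂ν₁.prod ν₂ ≤ (∫ p, F p ∂ν₁.prod ν₂) * ∫ p, G p ∂ν₁.prod ν₂ := by
  set S := {a | a ∈ s ∧ Integrable (fun b => F (a, b)) ν₂ ∧ Integrable (fun b => G (a, b)) ν₂}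
  have hS : ∀ᵐ a ∂ν₁, a ∈ S := by
    filter_upwards [hs, hF.prod_right_ae, hG.prod_right_ae] with a has hFa hGa using ⟨has, hFa, hGa⟩
  have hφ : MonotoneOn (fun a => ∫ b, F (a, b) ∂ν₂) S := fun a ha a' ha' haa' =>
    integral_mono_ae ha.2.1 ha'.2.1 <| by
      filter_upwards [ht] with b hb using hF₁ b hb ha.1 ha'.1 haa'
  have hψ : AntitoneOn (fun a => ∫ b, G (a, b) ∂ν₂) S := fun a ha a' ha' haa' =>
    integral_mono_ae ha'.2.2 ha.2.2 <| by
      filter_upwards [ht] with b hb using hG₁ b hb ha.1 ha'.1 haa'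
  have hinner : ∀ᵐ a ∂ν₁, ∫ b, F (a, b) * G (a, b) ∂ν₂ ≤
      (∫ b, F (a, b) ∂ν₂) * ∫ b, G (a, b) ∂ν₂ := by
    filter_upwards [hS, hFG.prod_right_ae] with a ⟨has, hFa, hGa⟩ hFGa
    rw [mul_comm]
    exact ((hG₂ a has).antivaryOn (hF₂ a has)).integral_le_integral_mul_integral ht hGa hFa hFGa
      (ae_of_all _ fun b => (mul_comm _ _).le)
  rw [integral_prod _ hF, integral_prod _ hG, integral_prod _ hFG]
  exact (hφ.antivaryOn hψ).integral_le_integral_mul_integral hS hF.integral_prod_left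
    hG.integral_prod_left hFG.integral_prod_left hinner

theorem ProbabilityTheory.IndepFun.integral_mul_le_integral_mul_integral {Ω α β : Type*}
    [MeasurableSpace Ω] {μ : Measure Ω} [IsProbabilityMeasure μ] [MeasurableSpace α] [MeasurableSpace β]
    [LinearOrder α] [LinearOrder β] {X : Ω → α} {Y : Ω → β} {F G : α × β → ℝ}
    {s : Set α} {t : Set β} (hXY : IndepFun X Y μ) (hX : AEMeasurable X μ) (hY : AEMeasurable Y μ)
    (hs : MeasurableSet s) (ht : MeasurableSet t) (hXs : ∀ᵐ ω ∂μ, X ω ∈ s)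
    (hYt : ∀ᵐ ω ∂μ, Y ω ∈ t)
    (hF₁ : ∀ b ∈ t, MonotoneOn (fun a => F (a, b)) s)
    (hF₂ : ∀ a ∈ s, AntitoneOn (fun b => F (a, b)) t)
    (hG₁ : ∀ b ∈ t, AntitoneOn (fun a => G (a, b)) s)
    (hG₂ : ∀ a ∈ s, MonotoneOn (fun b => G (a, b)) t)
    (hFm : AEStronglyMeasurable F (μ.map fun ω => (X ω, Y ω)))
    (hGm : AEStronglyMeasurable G (μ.map fun ω => (X ω, Y ω)))
    (hF : Integrable (fun ω => F (X ω, Y ω)) μ) (hG : Integrable (fun ω => G (X ω, Y ω)) μ)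
    (hFG : Integrable (fun ω => F (X ω, Y ω) * G (X ω, Y ω)) μ) :
    ∫ ω, F (X ω, Y ω) * G (X ω, Y ω) ∂μ ≤
      (∫ ω, F (X ω, Y ω) ∂μ) * ∫ ω, G (X ω, Y ω) ∂μ := by
  have hXY' : AEMeasurable (fun ω => (X ω, Y ω)) μ := hX.prodMk hY
  have hFGm : AEStronglyMeasurable (fun p => F p * G p) (μ.map fun ω => (X ω, Y ω)) :=
    hFm.mul hGm
  have hF' := (integrable_map_measure hFm hXY').2 hF
  have hG' := (integrable_map_measure hGm hXY').2 hG
  have hFG' := (integrable_map_measure hFGm hXY').2 hFG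
  have : IsProbabilityMeasure (μ.map X) := Measure.isProbabilityMeasure_map hX
  have : IsProbabilityMeasure (μ.map Y) := Measure.isProbabilityMeasure_map hY
  rw [← integral_map hXY' hFGm, ← integral_map hXY' hFm, ← integral_map hXY' hGm]
  rw [(indepFun_iff_map_prod_eq_prod_map_map hX hY).1 hXY] at hF' hG' hFG' ⊢
  exact integral_mul_le_integral_mul_integral_prod ((ae_map_iff hX hs).2 hXs)
    ((ae_map_iff hY ht).2 hYt) hF₁ hF₂ hG₁ hG₂ hF' hG' hFG'

theorem ConcaveOn.antitoneOn_div_self {C : ℝ → ℝ} (hC : ConcaveOn ℝ (Ioi 0) C)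
    (hC₀ : ∀ x ∈ Ioi (0 : ℝ), 0 ≤ C x) : AntitoneOn (fun x => C x / x) (Ioi 0) := by
  intro s hs t ht hst
  rcases hst.eq_or_lt with rfl | hlt
  · rfl
  -- As `C ε ≥ 0`, the chord slope from `ε` to `s` is at most `C s / (s - ε)`; then let `ε → 0`.
  have hchord : Ioo 0 s ⊆ {ε : ℝ | (s - ε) * C t ≤ (t - ε) * C s} := by
    rintro ε ⟨hε, hεs⟩
    show (s - ε) * C t ≤ (t - ε) * C s
    have hslope := hC.slope_anti_adjacent hε ht hεs hlt
    rw [div_le_div_iff₀ (by linarith) (by linarith)] at hslope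
    nlinarith [mul_nonneg (hC₀ ε hε) (sub_nonneg.2 hlt.le)]
  have hclosed : IsClosed {ε : ℝ | (s - ε) * C t ≤ (t - ε) * C s} :=
    isClosed_le (by fun_prop) (by fun_prop)
  have h0 : (0 : ℝ) ∈ closure (Ioo 0 s) := by
    rw [closure_Ioo (ne_of_lt hs)]
    exact ⟨le_rfl, le_of_lt hs⟩
  have hst' : s * C t ≤ t * C s := by simpa using hclosed.closure_subset_iff.2 hchord h0
  show C t / t ≤ C s / s
  rw [div_le_div_iff₀ (hs.trans hlt) hs]
  linarith

namespace IsCompressionFunction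

variable {C : ℝ → ℝ}

theorem monotone_indicator_Ioi (hC : IsCompressionFunction C) : Monotone ((Ioi 0).indicator C) := by
  intro x y hxy
  by_cases hx : x ∈ Ioi 0
  · have hy : y ∈ Ioi 0 := mem_Ioi.2 (hx.trans_le hxy)
    rw [indicator_of_mem hx, indicator_of_mem hy]
    exact hC.2.1 hx hy hxy
  · rw [indicator_of_notMem hx]
    exact indicator_nonneg hC.1 y

theorem aestronglyMeasurable_ecf (hC : IsCompressionFunction C) {γ : Type*} [MeasurableSpace γ]
    {ν : Measure γ} {f g : γ → ℝ} (hf : Measurable f) (hg : Measurable g)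
    (hfg : ∀ᵐ x ∂ν, 0 < f x + g x) : AEStronglyMeasurable (fun x => ECF C (f x) (g x)) ν := by
  -- `C` is arbitrary on `(-∞, 0]`, hence possibly non-measurable; the indicator is monotone.
  have hD : Measurable ((Ioi 0).indicator C) := hC.monotone_indicator_Ioi.measurable
  refine (Measurable.aestronglyMeasurable (f := fun x => ECF ((Ioi 0).indicator C) (f x) (g x))
    ((hD.comp (hf.add hg)).div (hf.add hg) |>.mul hf)).congr ?_
  filter_upwards [hfg] with x hx
  simp only [ECF, indicator_of_mem (show f x + g x ∈ Ioi 0 from hx)]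

theorem ecf_monotoneOn_left (hC : IsCompressionFunction C) {b : ℝ} (hb : 0 < b) :
    MonotoneOn (fun a => ECF C a b) (Ioi 0) := by
  intro a ha a' ha' haa'
  have hab : 0 < a + b := add_pos ha hb
  have ha'b : 0 < a' + b := add_pos ha' hb
  have hfrac : a / (a + b) ≤ a' / (a' + b) := by
    rw [div_le_div_iff₀ hab ha'b]
    nlinarith
  calc ECF C a b = C (a + b) * (a / (a + b)) := by unfold ECF; ring
    _ ≤ C (a' + b) * (a' / (a' + b)) :=
      mul_le_mul (hC.2.1 hab ha'b (by linarith)) hfrac (div_nonneg (le_of_lt ha) hab.le)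
        (hC.1 _ ha'b)
    _ = ECF C a' b := by unfold ECF; ring

theorem ecf_antitoneOn_right (hC : IsCompressionFunction C) {a : ℝ} (ha : 0 < a) :
    AntitoneOn (fun b => ECF C a b) (Ioi 0) := fun b hb b' hb' hbb' =>
  mul_le_mul_of_nonneg_right (hC.2.2.antitoneOn_div_self hC.1 (add_pos ha hb)
    (add_pos ha hb') (by linarith)) (le_of_lt ha)

end IsCompressionFunction

/-- Compression induces nonpositive covariance between independent envelopes:
Cov(Ĉ(V₁|V₂), Ĉ(V₂|V₁)) ≤ 0, i.e. E[Ĉ(V₁|V₂)·Ĉ(V₂|V₁)] ≤ E[Ĉ(V₁|V₂)]·E[Ĉ(V₂|V₁)]. -/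
theorem ecf_cov_nonpos
    {Ω : Type*} [MeasurableSpace Ω] (μ : Measure Ω) [IsProbabilityMeasure μ]
    (C : ℝ → ℝ) (hC : IsCompressionFunction C)
    (V₁ V₂ : Ω → ℝ) (hV₁ : Measurable V₁) (hV₂ : Measurable V₂)
    (hIndep : IndepFun V₁ V₂ μ)
    (hV₁pos : ∀ᵐ ω ∂μ, 0 < V₁ ω) (hV₂pos : ∀ᵐ ω ∂μ, 0 < V₂ ω)
    (hInt₁ : Integrable (fun ω => ECF C (V₁ ω) (V₂ ω)) μ)
    (hInt₂ : Integrable (fun ω => ECF C (V₂ ω) (V₁ ω)) μ)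
    (hInt₁₂ : Integrable (fun ω => ECF C (V₁ ω) (V₂ ω) * ECF C (V₂ ω) (V₁ ω)) μ) :
    ∫ ω, ECF C (V₁ ω) (V₂ ω) * ECF C (V₂ ω) (V₁ ω) ∂μ ≤
      (∫ ω, ECF C (V₁ ω) (V₂ ω) ∂μ) * ∫ ω, ECF C (V₂ ω) (V₁ ω) ∂μ := by
  have hpos : ∀ᵐ p ∂μ.map (fun ω => (V₁ ω, V₂ ω)), 0 < p.1 + p.2 :=
    (ae_map_iff (hV₁.prodMk hV₂).aemeasurable
      (measurableSet_lt measurable_const (measurable_fst.add measurable_snd))).2 <| by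
        filter_upwards [hV₁pos, hV₂pos] with ω h₁ h₂ using add_pos h₁ h₂
  exact hIndep.integral_mul_le_integral_mul_integral (F := fun p => ECF C p.1 p.2)
    (G := fun p => ECF C p.2 p.1) hV₁.aemeasurable hV₂.aemeasurable measurableSet_Ioi
    measurableSet_Ioi hV₁pos hV₂pos (fun _ hb => hC.ecf_monotoneOn_left hb)
    (fun _ ha => hC.ecf_antitoneOn_right ha) (fun _ hb => hC.ecf_antitoneOn_right hb)
    (fun _ ha => hC.ecf_monotoneOn_left ha)
    (hC.aestronglyMeasurable_ecf measurable_fst measurable_snd hpos)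
    (hC.aestronglyMeasurable_ecf measurable_snd measurable_fst <| by
      simpa only [add_comm] using hpos)
    hInt₁ hInt₂ hInt₁₂
end

section
/- Let C be a compression function, let v₁ > 0 and v₂ ≥ 0, and set vₓ = v₁ + v₂. Suppose C is differentiable at vₓ and C(vₓ) > 0. Then the effective compression slope satisfies ĈS(v₁|v₂) ≥ CS(vₓ). Moreover, equality holds if v₂ = 0, and equality holds for all such v₁, v₂ if C is linear on (0, ∞) (i.e., C(v) = a·v on (0, ∞) for some constant a > 0). -/
/-- The compression slope CS(v) = C′(v)·v / C(v). -/
noncomputable def CS (C : ℝ → ℝ) (v : ℝ) : ℝ :=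
  deriv C v * v / C v

/-- The effective compression slope ĈS(v₁|v₂) = v₁·(∂Ĉ(v₁|v₂)/∂v₁) / Ĉ(v₁|v₂). -/
noncomputable def ECS (C : ℝ → ℝ) (v₁ v₂ : ℝ) : ℝ :=
  v₁ * deriv (fun w => ECF C w v₂) v₁ / ECF C v₁ v₂

/-!
Differentiating `Ĉ(w|v₂) = C(w + v₂) · w / (w + v₂)` gives, with `s = v₁ + v₂`,
`ĈS(v₁|v₂) = CS(s) + v₂ · (C(s) - C'(s) · s) / (s · C(s))`.
The correction term vanishes when `v₂ = 0` or when `C` is linear near `s`, and it is nonnegative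
in general because a concave function that is nonnegative on `(0, ∞)` lies below its tangent at
`s`, whose value at `0` is `C(s) - C'(s) · s`.
-/

open Set Filter Topology

lemma ConcaveOn.deriv_mul_le_of_nonneg {C : ℝ → ℝ} (hconc : ConcaveOn ℝ (Ioi 0) C)
    (hnn : ∀ v ∈ Ioi (0 : ℝ), 0 ≤ C v) {s : ℝ} (hs : 0 < s) (hdiff : DifferentiableAt ℝ C s) :
    deriv C s * s ≤ C s := by
  have tangent_bound : ∀ t ∈ Ioo 0 s, deriv C s * (s - t) ≤ C s := by
    rintro t ⟨ht, hts⟩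
    have hslope := hconc.deriv_le_slope ht hs hts hdiff
    rw [slope_def_field, le_div_iff₀ (sub_pos.2 hts)] at hslope
    linarith [hnn t ht]
  have hlim : Tendsto (fun t => deriv C s * (s - t)) (𝓝[>] 0) (𝓝 (deriv C s * s)) := by
    have hcont : Continuous fun t : ℝ => deriv C s * (s - t) := by fun_prop
    simpa using (hcont.tendsto 0).mono_left nhdsWithin_le_nhds
  exact le_of_tendsto hlim (eventually_of_mem (Ioo_mem_nhdsGT hs) tangent_bound)

lemma hasDerivAt_ECF {C : ℝ → ℝ} {v₁ v₂ : ℝ} (hdiff : DifferentiableAt ℝ C (v₁ + v₂))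
    (hs : v₁ + v₂ ≠ 0) :
    HasDerivAt (fun w => ECF C w v₂)
      (deriv C (v₁ + v₂) * v₁ / (v₁ + v₂) + C (v₁ + v₂) * v₂ / (v₁ + v₂) ^ 2) v₁ := by
  have hshift := (hasDerivAt_id' v₁).add_const v₂
  refine (((hdiff.hasDerivAt.comp v₁ hshift).div hshift hs).mul (hasDerivAt_id' v₁)).congr_deriv ?_
  simp only [Function.comp_apply, Pi.div_apply]
  field_simp
  ring

lemma ECS_eq_CS_add {C : ℝ → ℝ} {v₁ v₂ : ℝ} (hdiff : DifferentiableAt ℝ C (v₁ + v₂))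
    (hv₁ : v₁ ≠ 0) (hs : v₁ + v₂ ≠ 0) (hC : C (v₁ + v₂) ≠ 0) :
    ECS C v₁ v₂ = CS C (v₁ + v₂) +
      v₂ * (C (v₁ + v₂) - deriv C (v₁ + v₂) * (v₁ + v₂)) / ((v₁ + v₂) * C (v₁ + v₂)) := by
  rw [ECS, (hasDerivAt_ECF hdiff hs).deriv, ECF, CS]
  field_simp
  ring

lemma hasDerivAt_of_forall_pos_eq_mul {C : ℝ → ℝ} {a s : ℝ} (hlin : ∀ v, 0 < v → C v = a * v)
    (hs : 0 < s) : HasDerivAt C a s := by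
  have hlocal : C =ᶠ[𝓝 s] fun v => a * v :=
    eventually_of_mem (Ioi_mem_nhds hs) hlin
  simpa using ((hasDerivAt_id s).const_mul a).congr_of_eventuallyEq hlocal

/-- The effective compression slope is at least the nominal compression slope:
ĈS(v₁|v₂) ≥ CS(v₁+v₂), with equality when v₂ = 0, and with equality for all
admissible v₁, v₂ whenever C is linear on (0, ∞). -/
theorem ecs_ge_cs (C : ℝ → ℝ) (hC : IsCompressionFunction C)
    (v₁ v₂ : ℝ) (hv₁ : 0 < v₁) (hv₂ : 0 ≤ v₂)
    (hdiff : DifferentiableAt ℝ C (v₁ + v₂)) (hpos : 0 < C (v₁ + v₂)) :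
    ECS C v₁ v₂ ≥ CS C (v₁ + v₂) ∧
    (v₂ = 0 → ECS C v₁ v₂ = CS C (v₁ + v₂)) ∧
    ((∃ a : ℝ, 0 < a ∧ ∀ v : ℝ, 0 < v → C v = a * v) →
      ∀ w₁ w₂ : ℝ, 0 < w₁ → 0 ≤ w₂ → ECS C w₁ w₂ = CS C (w₁ + w₂)) := by
  have hs : 0 < v₁ + v₂ := by linarith
  have hformula := ECS_eq_CS_add hdiff hv₁.ne' hs.ne' hpos.ne'
  refine ⟨?_, fun h => by simpa [h] using hformula, ?_⟩
  · have htangent := hC.2.2.deriv_mul_le_of_nonneg hC.1 hs hdiff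
    rw [hformula, ge_iff_le, le_add_iff_nonneg_right]
    exact div_nonneg (mul_nonneg hv₂ (sub_nonneg.2 htangent)) (by positivity)
  · rintro ⟨a, ha, hlin⟩ w₁ w₂ hw₁ hw₂
    have hw : 0 < w₁ + w₂ := by linarith
    have hderiv := hasDerivAt_of_forall_pos_eq_mul hlin hw
    have hCw : C (w₁ + w₂) = a * (w₁ + w₂) := hlin _ hw
    rw [ECS_eq_CS_add hderiv.differentiableAt hw₁.ne' hw.ne' (by rw [hCw]; positivity),
      hderiv.deriv, hCw]
    simp
end

section
/- Let C be a compression function and let v₂ > 0. Suppose C is differentiable on an open neighborhood of v₂, its derivative C′ is continuous at v₂, and C(v₂) > 0. Then the effective compression slope of the target signal tends to 1 as its level tends to zero: lim_{v₁ → 0⁺} ĈS(v₁|v₂) = 1. -/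
open Filter Topology

/- The elasticity of `w ↦ g w * w` is `1 + w * g' w / g w`, and the correction term vanishes
at `0` as soon as `g'` stays bounded and `g 0 ≠ 0`. -/
theorem tendsto_elasticity_mul_id_nhdsNE_zero {g g' : ℝ → ℝ}
    (hg : ∀ᶠ w in 𝓝 0, HasDerivAt g (g' w) w) (hg' : ContinuousAt g' 0) (hg0 : g 0 ≠ 0) :
    Tendsto (fun w => w * deriv (fun u => g u * u) w / (g w * w)) (𝓝[≠] 0) (𝓝 1) := by
  have hgc : ContinuousAt g 0 := hg.self_of_nhds.continuousAt
  have hcorr : Tendsto (fun w => 1 + w * g' w / g w) (𝓝[≠] 0) (𝓝 1) := by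
    have h : ContinuousAt (fun w => 1 + w * g' w / g w) 0 :=
      continuousAt_const.add ((continuousAt_id.mul hg').div hgc hg0)
    simpa using h.tendsto.mono_left nhdsWithin_le_nhds
  refine hcorr.congr' ?_
  filter_upwards [nhdsWithin_le_nhds hg, nhdsWithin_le_nhds (hgc.eventually_ne hg0),
    self_mem_nhdsWithin] with w hgw hgw0 (hw : w ≠ 0)
  have hprod : HasDerivAt (fun u => g u * u) (g' w * w + g w * 1) w :=
    hgw.mul (hasDerivAt_id' w)
  rw [hprod.deriv]
  field_simp
  ring

theorem hasDerivAt_div_id {C : ℝ → ℝ} {x : ℝ} (hC : DifferentiableAt ℝ C x) (hx : x ≠ 0) :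
    HasDerivAt (fun y => C y / y) ((deriv C x * x - C x) / x ^ 2) x := by
  have h : HasDerivAt (fun y => C y / y) ((deriv C x * x - C x * 1) / x ^ 2) x :=
    hC.hasDerivAt.div (hasDerivAt_id' x) hx
  simpa using h

theorem ecs_tendsto_one_general (C : ℝ → ℝ)
    (v₂ : ℝ) (hv₂ : 0 < v₂)
    (U : Set ℝ) (hU : IsOpen U) (hv₂U : v₂ ∈ U)
    (hdiff : ∀ x ∈ U, DifferentiableAt ℝ C x)
    (hderiv_cont : ContinuousAt (deriv C) v₂)
    (hpos : 0 < C v₂) :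
    Filter.Tendsto (fun v₁ => ECS C v₁ v₂) (nhdsWithin 0 (Set.Ioi 0)) (nhds 1) := by
  have hshift : Tendsto (· + v₂) (𝓝 (0 : ℝ)) (𝓝 v₂) := by
    simpa using (continuous_add_const v₂).tendsto (0 : ℝ)
  have hquot_deriv : ∀ᶠ x in 𝓝 v₂, HasDerivAt (fun y => C y / y) ((deriv C x * x - C x) / x ^ 2) x := by
    filter_upwards [hU.mem_nhds hv₂U, eventually_ne_nhds hv₂.ne'] with x hxU hx
    exact hasDerivAt_div_id (hdiff x hxU) hx
  have hquot_deriv_cont : ContinuousAt (fun x => (deriv C x * x - C x) / x ^ 2) v₂ :=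
    ((hderiv_cont.mul continuousAt_id).sub (hdiff v₂ hv₂U).continuousAt).div
      (continuousAt_id.pow 2) (pow_ne_zero 2 hv₂.ne')
  -- `ECF C w v₂` is definitionally `g w * w` for `g w = C (w + v₂) / (w + v₂)`.
  have hlim := tendsto_elasticity_mul_id_nhdsNE_zero (g := fun w => C (w + v₂) / (w + v₂))
    ((hshift.eventually hquot_deriv).mono fun w hw => hw.comp_add_const)
    (hquot_deriv_cont.comp_of_eq (continuous_add_const v₂).continuousAt (zero_add v₂))
    (by simpa using ⟨hpos.ne', hv₂.ne'⟩)
  exact hlim.mono_left (nhdsWithin_mono _ fun w hw => ne_of_gt hw)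

/-- At very low target level, the effective compression slope approaches 1:
lim_{v₁ → 0⁺} ĈS(v₁|v₂) = 1. -/
theorem ecs_tendsto_one (C : ℝ → ℝ) (hC : IsCompressionFunction C)
    (v₂ : ℝ) (hv₂ : 0 < v₂)
    (U : Set ℝ) (hU : IsOpen U) (hv₂U : v₂ ∈ U)
    (hdiff : ∀ x ∈ U, DifferentiableAt ℝ C x)
    (hderiv_cont : ContinuousAt (deriv C) v₂)
    (hpos : 0 < C v₂) :
    Filter.Tendsto (fun v₁ => ECS C v₁ v₂) (nhdsWithin 0 (Set.Ioi 0)) (nhds 1) :=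
  ecs_tendsto_one_general C v₂ hv₂ U hU hv₂U hdiff hderiv_cont hpos
end

section
/- Let C be a compression function such that the gain function v ↦ C(v)/v is convex on (0, ∞). Then for every fixed v₂ ≥ 0, the map v₁ ↦ Ĉ(v₁|v₂) is concave on (0, ∞). -/
/-! Writing `g v = C v / v` for the gain, `Ĉ(v₁|v₂) = C(v₁ + v₂) - v₂ • g(v₁ + v₂)`: a concave
function minus a nonnegative multiple of a convex one. -/

open Set

lemma Ioi_zero_subset_preimage_add_const {a : ℝ} (ha : 0 ≤ a) :
    Ioi (0 : ℝ) ⊆ (fun x => a + x) ⁻¹' Ioi 0 :=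
  fun _ hx => show 0 < a + _ from add_pos_of_nonneg_of_pos ha hx

lemma ConvexOn.comp_add_const_Ioi {f : ℝ → ℝ} (hf : ConvexOn ℝ (Ioi 0) f) {a : ℝ} (ha : 0 ≤ a) :
    ConvexOn ℝ (Ioi 0) (fun x => f (x + a)) :=
  (hf.translate_left a).subset (Ioi_zero_subset_preimage_add_const ha) (convex_Ioi 0)

lemma ConcaveOn.comp_add_const_Ioi {f : ℝ → ℝ} (hf : ConcaveOn ℝ (Ioi 0) f) {a : ℝ}
    (ha : 0 ≤ a) : ConcaveOn ℝ (Ioi 0) (fun x => f (x + a)) :=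
  (hf.translate_left a).subset (Ioi_zero_subset_preimage_add_const ha) (convex_Ioi 0)

lemma ECF_eq_sub_smul_gain (C : ℝ → ℝ) {v₁ v₂ : ℝ} (hv : v₁ + v₂ ≠ 0) :
    ECF C v₁ v₂ = C (v₁ + v₂) - v₂ • (C (v₁ + v₂) / (v₁ + v₂)) := by
  rw [ECF, smul_eq_mul]
  field_simp
  ring

/-- If the gain function C(v)/v is convex on (0, ∞), then for every fixed v₂ ≥ 0
the effective compression function is concave in v₁ on (0, ∞). -/
theorem ecf_concaveOn_fst (C : ℝ → ℝ) (hC : IsCompressionFunction C)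
    (hGain : ConvexOn ℝ (Set.Ioi (0 : ℝ)) (fun v => C v / v))
    (v₂ : ℝ) (hv₂ : 0 ≤ v₂) :
    ConcaveOn ℝ (Set.Ioi (0 : ℝ)) (fun v₁ => ECF C v₁ v₂) := by
  have hShifted : ConcaveOn ℝ (Ioi 0) (fun v₁ => C (v₁ + v₂)) :=
    hC.2.2.comp_add_const_Ioi hv₂
  have hShiftedGain : ConvexOn ℝ (Ioi 0) (fun v₁ => v₂ • (C (v₁ + v₂) / (v₁ + v₂))) :=
    (hGain.comp_add_const_Ioi hv₂).smul hv₂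
  refine (hShifted.sub hShiftedGain).congr fun v₁ (hv₁ : 0 < v₁) => ?_
  exact (ECF_eq_sub_smul_gain C (add_pos_of_pos_of_nonneg hv₁ hv₂).ne').symm
end
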